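/- A channel C : M_d(C) → M_{d'}(C) is entanglement-breaking (i.e., (C ⊗ id)(ρ) is separable for every state ρ on C^d ⊗ C^n, all n) if and only if its Choi operator R_C is separable. -/

import Mathlib

open Matrix Kronecker BigOperators
open scoped ComplexOrder

/-- A bipartite matrix is separable if it is a finite sum of tensor products of
positive semidefinite matrices. -/
def Separable {α β : Type*} [Fintype α] [Fintype β]
    (M : Matrix (α × β) (α × β) ℂ) : Prop :=
  ∃ (k : ℕ) (A : Fin k → Matrix α α ℂ) (B : Fin k → Matrix β β ℂ),
    (∀ i, (A i).PosSemidef) ∧ (∀ i, (B i).PosSemidef) ∧ M = ∑ i, (A i) ⊗ₖ (B i)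

/-- The extension `Φ ⊗ id_n` of a linear map to the first tensor factor. -/
def extMap {d d' : ℕ} {n : Type*}
    (Φ : Matrix (Fin d) (Fin d) ℂ →ₗ[ℂ] Matrix (Fin d') (Fin d') ℂ)
    (X : Matrix (Fin d × n) (Fin d × n) ℂ) : Matrix (Fin d' × n) (Fin d' × n) ℂ :=
  Matrix.of fun p q => Φ (Matrix.of fun m n => X (m, p.2) (n, q.2)) p.1 q.1

/-- The unnormalized maximally entangled vector `|I⟩⟩ = ∑ n, |n⟩ ⊗ |n⟩`. -/
def vecI {d : ℕ} : Fin d × Fin d → ℂ :=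
  fun p => if p.1 = p.2 then 1 else 0

/-- The Choi operator `R_Φ := (Φ ⊗ id)(|I⟩⟩⟨⟨I|)`. -/
def choi {d d' : ℕ} (Φ : Matrix (Fin d) (Fin d) ℂ →ₗ[ℂ] Matrix (Fin d') (Fin d') ℂ) :
    Matrix (Fin d' × Fin d) (Fin d' × Fin d) ℂ :=
  extMap Φ (Matrix.of fun p q => vecI p * vecI q)

/-!
A linear map is recovered from its Choi matrix: `Φ Y = ∑ᵢⱼ Yᵢⱼ · R_Φ[·, i; ·, j]`.
Hence if `R_Φ = ∑ₖ Aₖ ⊗ Bₖ`, then `(Φ ⊗ id)(ρ) = ∑ₖ Aₖ ⊗ Tr₁((Bₖᵀ ⊗ 1) ρ)`,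
and `Tr₁((Bᵀ ⊗ 1) ρ) = ∑ⱼ Kⱼᴴ ρ Kⱼ` is positive semidefinite when `B = Lᴴ L` and `ρ` are.
Conversely, `R_Φ` is `d` times the image of the normalized maximally entangled state.
-/

section contractFst

variable {𝕜 m n : Type*} [RCLike 𝕜] [Fintype m] [Fintype n]

/-- `contractFst B X = Tr₁((Bᵀ ⊗ 1) X)`. -/
def contractFst (B : Matrix m m 𝕜) (X : Matrix (m × n) (m × n) 𝕜) : Matrix n n 𝕜 :=
  Matrix.of fun a b => ∑ i, ∑ j, X (i, a) (j, b) * B i j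

open scoped MatrixOrder in
theorem posSemidef_contractFst {B : Matrix m m 𝕜} {X : Matrix (m × n) (m × n) 𝕜}
    (hB : B.PosSemidef) (hX : X.PosSemidef) : (contractFst B X).PosSemidef := by
  classical
  obtain ⟨L, rfl⟩ := CStarAlgebra.nonneg_iff_eq_star_mul_self.mp hB.nonneg
  let K : m → Matrix (m × n) n 𝕜 := fun k =>
    Matrix.of fun x c => L k x.1 * (1 : Matrix n n 𝕜) x.2 c
  have hK : contractFst (star L * L) X = ∑ k, (K k)ᴴ * X * K k := by
    ext a b
    simp only [contractFst, K, of_apply, Matrix.mul_apply, Matrix.sum_apply, conjTranspose_apply,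
      Matrix.one_apply, star_apply, RCLike.star_def, apply_ite (starRingEnd 𝕜), map_zero, mul_ite,
      mul_one, mul_zero, ite_mul, zero_mul, Fintype.sum_prod_type, Finset.sum_ite_eq',
      Finset.mem_univ, ↓reduceIte, Finset.mul_sum, Finset.sum_mul]
    rw [Finset.sum_comm_cycle]
    refine Finset.sum_congr rfl fun k _ => ?_
    rw [Finset.sum_comm]
    exact Finset.sum_congr rfl fun j _ => Finset.sum_congr rfl fun i _ => by ring
  rw [hK]
  exact posSemidef_sum _ fun k _ => hX.conjTranspose_mul_mul_same (K k)

end contractFst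

theorem Separable.smul {α β : Type*} [Fintype α] [Fintype β] {M : Matrix (α × β) (α × β) ℂ}
    (hM : Separable M) {c : ℂ} (hc : 0 ≤ c) : Separable (c • M) := by
  obtain ⟨k, A, B, hA, hB, rfl⟩ := hM
  refine ⟨k, fun i => c • A i, B, fun i => (hA i).smul hc, hB, ?_⟩
  simp only [Finset.smul_sum, smul_kronecker]

theorem separable_of_isEmpty {α β : Type*} [Fintype α] [Fintype β] [IsEmpty β]
    (M : Matrix (α × β) (α × β) ℂ) : Separable M :=
  ⟨0, ![], ![], finZeroElim, finZeroElim, Subsingleton.elim _ _⟩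

theorem posSemidef_vecI_mul_vecI {d : ℕ} :
    (Matrix.of fun p q => vecI (d := d) p * vecI q).PosSemidef := by
  convert posSemidef_vecMulVec_self_star (vecI (d := d)) using 1
  ext p q
  simp [vecMulVec, vecI]

theorem trace_vecI_mul_vecI {d : ℕ} :
    (Matrix.of fun p q => vecI (d := d) p * vecI q).trace = d := by
  simp [Matrix.trace, vecI, Fintype.sum_prod_type]

section choi

variable {d d' : ℕ} (Φ : Matrix (Fin d) (Fin d) ℂ →ₗ[ℂ] Matrix (Fin d') (Fin d') ℂ)

theorem choi_apply (p q : Fin d') (i j : Fin d) :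
    choi Φ (p, i) (q, j) = Φ (single i j 1) p q := by
  have : (Matrix.of fun a b => vecI (a, i) * vecI (b, j) : Matrix (Fin d) (Fin d) ℂ) =
      single i j 1 := by
    ext a b
    simp only [vecI, of_apply, single_apply]
    split_ifs <;> simp_all
  simp [choi, extMap, this]

theorem apply_eq_sum_choi (Y : Matrix (Fin d) (Fin d) ℂ) (p q : Fin d') :
    Φ Y p q = ∑ i, ∑ j, Y i j * choi Φ (p, i) (q, j) := by
  have hY : Y = ∑ i, ∑ j, Y i j • single i j (1 : ℂ) := by
    simpa [smul_single] using matrix_eq_sum_single Y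
  conv_lhs => rw [hY]
  simp only [map_sum, map_smul, Matrix.sum_apply, Matrix.smul_apply, smul_eq_mul, choi_apply]

theorem extMap_smul {n : Type*} (c : ℂ) (X : Matrix (Fin d × n) (Fin d × n) ℂ) :
    extMap Φ (c • X) = c • extMap Φ X := by
  ext p q
  exact congrArg (· p.1 q.1) (map_smul Φ c (of fun i j => X (i, p.2) (j, q.2)))

theorem extMap_eq_sum_kronecker_of_choi_eq {n : Type*} [Fintype n] {k : ℕ}
    {A : Fin k → Matrix (Fin d') (Fin d') ℂ} {B : Fin k → Matrix (Fin d) (Fin d) ℂ}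
    (h : choi Φ = ∑ i, A i ⊗ₖ B i) (X : Matrix (Fin d × n) (Fin d × n) ℂ) :
    extMap Φ X = ∑ i, A i ⊗ₖ contractFst (B i) X := by
  ext ⟨p, a⟩ ⟨q, b⟩
  simp only [extMap, of_apply, apply_eq_sum_choi Φ, h, contractFst, Matrix.sum_apply,
    kroneckerMap_apply, Finset.mul_sum]
  rw [Finset.sum_comm_cycle]
  exact Finset.sum_congr rfl fun k _ => Finset.sum_congr rfl fun i _ =>
    Finset.sum_congr rfl fun j _ => by ring

theorem separable_extMap_of_separable_choi (h : Separable (choi Φ)) {n : Type*} [Fintype n]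
    {ρ : Matrix (Fin d × n) (Fin d × n) ℂ} (hρ : ρ.PosSemidef) :
    Separable (extMap Φ ρ) := by
  obtain ⟨k, A, B, hA, hB, hchoi⟩ := h
  exact ⟨k, A, fun i => contractFst (B i) ρ, hA, fun i => posSemidef_contractFst (hB i) hρ,
    extMap_eq_sum_kronecker_of_choi_eq Φ hchoi ρ⟩

theorem separable_choi_of_forall_separable_extMap
    (h : ∀ ρ : Matrix (Fin d × Fin d) (Fin d × Fin d) ℂ,
      ρ.PosSemidef → ρ.trace = 1 → Separable (extMap Φ ρ)) :
    Separable (choi Φ) := by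
  rcases Nat.eq_zero_or_pos d with rfl | hd
  · exact separable_of_isEmpty _
  have hd' : (d : ℂ) ≠ 0 := Nat.cast_ne_zero.mpr hd.ne'
  have hdinv : (0 : ℂ) ≤ (d : ℂ)⁻¹ := by positivity
  have hsep := h ((d : ℂ)⁻¹ • Matrix.of fun p q => vecI p * vecI q)
    (posSemidef_vecI_mul_vecI.smul hdinv)
    (by rw [trace_smul, trace_vecI_mul_vecI, smul_eq_mul, inv_mul_cancel₀ hd'])
  have hchoi :
      choi Φ = (d : ℂ) • extMap Φ ((d : ℂ)⁻¹ • Matrix.of fun p q => vecI p * vecI q) := by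
    rw [extMap_smul, smul_smul, mul_inv_cancel₀ hd', one_smul, choi]
  rw [hchoi]
  exact hsep.smul (Nat.cast_nonneg d)

end choi

theorem entanglementBreaking_iff_choi_separable_general {d d' : ℕ}
    (Φ : Matrix (Fin d) (Fin d) ℂ →ₗ[ℂ] Matrix (Fin d') (Fin d') ℂ) :
    (∀ (n : ℕ) (ρ : Matrix (Fin d × Fin n) (Fin d × Fin n) ℂ),
        ρ.PosSemidef → ρ.trace = 1 → Separable (extMap Φ ρ)) ↔
      Separable (choi Φ) :=
  ⟨fun h => separable_choi_of_forall_separable_extMap Φ (h d),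
    fun h _ _ hρ _ => separable_extMap_of_separable_choi Φ h hρ⟩

/-- a channel `Φ` is entanglement-breaking — `(Φ ⊗ id)(ρ)` is separable
for every state `ρ` on `ℂ^d ⊗ ℂ^n`, for all `n` — iff its Choi operator is separable. -/
theorem entanglementBreaking_iff_choi_separable {d d' : ℕ}
    (Φ : Matrix (Fin d) (Fin d) ℂ →ₗ[ℂ] Matrix (Fin d') (Fin d') ℂ)
    (hCP : (choi Φ).PosSemidef) (hTP : ∀ X, (Φ X).trace = X.trace) :
    (∀ (n : ℕ) (ρ : Matrix (Fin d × Fin n) (Fin d × Fin n) ℂ),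
        ρ.PosSemidef → ρ.trace = 1 → Separable (extMap Φ ρ)) ↔
      Separable (choi Φ) :=
  entanglementBreaking_iff_choi_separable_general Φ
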